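/- For every m ≥ 1 there exist nonnegative integers n and t such that s_2(n + ℓ·t) − s_2(n + (ℓ−1)·t) = 0 for all ℓ with 1 ≤ ℓ < m, and s_2(n + m·t) − s_2(n + (m−1)·t) = 1 (differences taken in ℤ). -/

import Mathlib

/-- The binary sum-of-digits function. -/
def s2 (n : ℕ) : ℕ := (Nat.digits 2 n).sum

lemma s2_zero : s2 0 = 0 := by simp [s2]

lemma s2_bit (n b : ℕ) (hb : b < 2) (hne : 2 * n + b ≠ 0) :
    s2 (2 * n + b) = s2 n + b := by
  unfold s2
  rw [Nat.digits_def' (by norm_num : 1 < 2) (Nat.pos_of_ne_zero hne)]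
  have h1 : (2 * n + b) % 2 = b := by omega
  have h2 : (2 * n + b) / 2 = n := by omega
  rw [h1, h2, List.sum_cons]
  ring

lemma s2_pow_mul_add (k x y : ℕ) (hy : y < 2 ^ k) :
    s2 (2 ^ k * x + y) = s2 x + s2 y := by
  induction k generalizing y with
  | zero =>
    interval_cases y
    simp [s2_zero]
  | succ k ih =>
    rcases Nat.eq_zero_or_pos (2 ^ (k + 1) * x + y) with h | h
    · have hx : x = 0 := by
        by_contra hx
        have : 2 ^ (k + 1) * x ≥ 1 := Nat.one_le_iff_ne_zero.mpr (by positivity)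
        omega
      have hy0 : y = 0 := by omega
      simp [hx, hy0, s2_zero]
    · have key : 2 ^ (k + 1) * x + y = 2 * (2 ^ k * x + y / 2) + y % 2 := by
        have := Nat.div_add_mod y 2
        ring_nf
        omega
      rw [key, s2_bit _ _ (Nat.mod_lt _ (by norm_num)) (by omega)]
      have hy2 : y / 2 < 2 ^ k := by
        have : 2 ^ (k + 1) = 2 * 2 ^ k := by ring
        omega
      rw [ih _ hy2]
      rcases Nat.eq_zero_or_pos y with hy0 | hy0
      · simp [hy0, s2_zero]
      · have : y = 2 * (y / 2) + y % 2 := by omega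
        have hsy : s2 y = s2 (y / 2) + y % 2 := by
          nth_rewrite 1 [this]
          exact s2_bit _ _ (Nat.mod_lt _ (by norm_num)) (by omega)
        omega

lemma s2_compl (j : ℕ) : ∀ x < 2 ^ j, s2 x + s2 (2 ^ j - 1 - x) = j := by
  induction j with
  | zero => intro x hx; interval_cases x; simp [s2_zero]
  | succ j ih =>
    intro x hx
    have h2 : (2:ℕ) ^ (j + 1) = 2 * 2 ^ j := by ring
    have hq : x / 2 < 2 ^ j := by omega
    have hx2 : x = 2 * (x / 2) + x % 2 := by omega
    have hc : 2 ^ (j + 1) - 1 - x = 2 * (2 ^ j - 1 - x / 2) + (1 - x % 2) := by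
      have h1 : (1:ℕ) ≤ 2 ^ j := Nat.one_le_two_pow
      omega
    have h1 : (1:ℕ) ≤ 2 ^ j := Nat.one_le_two_pow
    have hih := ih (x / 2) hq
    rcases eq_or_ne (2 * (2 ^ j - 1 - x / 2) + (1 - x % 2)) 0 with hz | hz
    · have hxm : x % 2 = 1 := by omega
      have hxd : x / 2 = 2 ^ j - 1 := by omega
      have hsx : s2 x = s2 (x / 2) + 1 := by
        nth_rewrite 1 [hx2]
        rw [hxm]
        exact s2_bit _ _ (by omega) (by omega)
      rw [hc, hz, s2_zero]
      rw [hxd] at hih hsx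
      simp only [Nat.sub_self, s2_zero] at hih
      omega
    rw [hc, s2_bit _ _ (by omega) hz]
    rcases Nat.eq_zero_or_pos x with hx0 | hx0
    · subst hx0
      simp only [Nat.zero_div, Nat.zero_mod, Nat.sub_zero] at hih ⊢
      rw [s2_zero] at hih ⊢
      omega
    · have hsx : s2 x = s2 (x / 2) + x % 2 := by
        nth_rewrite 1 [hx2]
        exact s2_bit _ _ (by omega) (by omega)
      omega

lemma s2_one : s2 1 = 1 := by simp [s2]

lemma s2_pow (j : ℕ) : s2 (2 ^ j) = 1 := by
  have := s2_pow_mul_add j 1 0 (by positivity)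
  simpa [s2_zero, s2_one] using this

lemma s2_pred_pow (j : ℕ) : s2 (2 ^ j - 1) = j := by
  have := s2_compl j 0 (by positivity)
  simpa [s2_zero] using this

theorem stmt_17 (m : ℕ) (hm : 1 ≤ m) :
    ∃ n t : ℕ,
      (∀ ℓ : ℕ, 1 ≤ ℓ → ℓ < m →
        (s2 (n + ℓ * t) : ℤ) - (s2 (n + (ℓ - 1) * t) : ℤ) = 0) ∧
      (s2 (n + m * t) : ℤ) - (s2 (n + (m - 1) * t) : ℤ) = 1 := by
  set K : ℕ := 2 ^ (m + 2) with hK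
  refine ⟨(2 ^ m - m) * K + (2 ^ (m + 1) + m - 1), K - 1, ?_⟩
  have hmP : m < 2 ^ m := Nat.lt_two_pow_self
  have hP1 : (2:ℕ) ^ (m + 1) = 2 * 2 ^ m := by ring
  have hP2 : K = 4 * 2 ^ m := by rw [hK]; ring
  have hK1 : 1 ≤ K := Nat.one_le_two_pow
  -- decomposition of n + ℓ * t for ℓ ≤ m
  have decomp : ∀ ℓ ≤ m,
      (2 ^ m - m) * K + (2 ^ (m + 1) + m - 1) + ℓ * (K - 1)
        = (2 ^ m - m + ℓ) * K + (2 ^ (m + 1) + m - 1 - ℓ) := by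
    intro ℓ hℓ
    have e1 : (2 ^ m - m + ℓ) * K = (2 ^ m - m) * K + ℓ * K := by ring
    have e2 : ℓ * K = ℓ * (K - 1) + ℓ := by
      have : K = (K - 1) + 1 := by omega
      nth_rewrite 1 [this]; ring
    omega
  -- value for ℓ < m
  have val_lt : ∀ ℓ < m,
      s2 ((2 ^ m - m) * K + (2 ^ (m + 1) + m - 1) + ℓ * (K - 1)) = m + 1 := by
    intro ℓ hℓ
    rw [decomp ℓ (le_of_lt hℓ)]
    have hlow : 2 ^ (m + 1) + m - 1 - ℓ = 2 ^ (m + 1) * 1 + (m - 1 - ℓ) := by omega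
    have hylt : m - 1 - ℓ < 2 ^ (m + 1) := by omega
    have hlowlt : 2 ^ (m + 1) * 1 + (m - 1 - ℓ) < K := by omega
    rw [hlow, mul_comm (2 ^ m - m + ℓ) K, hK, s2_pow_mul_add _ _ _ (by omega),
      s2_pow_mul_add _ _ _ hylt, s2_one]
    have hxlt : 2 ^ m - m + ℓ < 2 ^ m := by omega
    have hcompl := s2_compl m (2 ^ m - m + ℓ) hxlt
    have hco : 2 ^ m - 1 - (2 ^ m - m + ℓ) = m - 1 - ℓ := by omega
    rw [hco] at hcompl
    omega
  -- value at ℓ = m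
  have val_m :
      s2 ((2 ^ m - m) * K + (2 ^ (m + 1) + m - 1) + m * (K - 1)) = m + 2 := by
    rw [decomp m le_rfl]
    have e1 : 2 ^ m - m + m = 2 ^ m := by omega
    have e2 : 2 ^ (m + 1) + m - 1 - m = 2 ^ (m + 1) - 1 := by omega
    rw [e1, e2, mul_comm, hK, s2_pow_mul_add _ _ _ (by omega), s2_pow,
      s2_pred_pow]
    omega
  constructor
  · intro ℓ h1 h2
    rw [val_lt ℓ h2, val_lt (ℓ - 1) (by omega)]
    ring
  · rw [val_m, val_lt (m - 1) (by omega)]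
    push_cast
    ring
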